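/- For any subset A of a permutative semigroup S, Sep(A) is either empty or a reflexive unitary subsemigroup of S. -/

import Mathlib

/-- The product `a * l₁ * l₂ * ⋯ * lₘ` of an element and a list in a semigroup. -/
def pProd {S : Type*} [Semigroup S] (a : S) (l : List S) : S :=
  l.foldl (· * ·) a

/-- `S` satisfies the nontrivial permutation identity given by `σ` (on `n ≥ 2` letters). -/
def PermIdentity {S : Type*} [Semigroup S] (n : ℕ) (hn : 2 ≤ n)
    (σ : Equiv.Perm (Fin n)) : Prop :=
  ∀ x : Fin n → S,
    pProd (x ⟨0, by omega⟩) (List.ofFn x).tail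
      = pProd (x (σ ⟨0, by omega⟩)) (List.ofFn (x ∘ σ)).tail

/-- The separator of a subset `A` of a semigroup `S`. -/
def Separator {S : Type*} [Semigroup S] (A : Set S) : Set S :=
  {x | (∀ a ∈ A, x * a ∈ A) ∧ (∀ a ∈ A, a * x ∈ A) ∧
       (∀ a ∉ A, x * a ∉ A) ∧ (∀ a ∉ A, a * x ∉ A)}

/-!
Work in the monoid `WithOne S` of words over `S`. Given `s ∈ Sep(A)`, substitute `s` for every
variable of the permutation identity except two adjacent ones `x, y` that `σ` puts in reverse
order; this gives `sⁱ x y sʳ = s^α y s^μ x s^β`. As `s` may be deleted at either end of a nonempty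
word without changing membership in `A`, it follows that `xy ∈ A ↔ y s^μ x ∈ A`, and then that `s`
may be deleted anywhere: `s ≡ 1` for the syntactic congruence of `A`. Modulo this congruence the
same identity reads `xy ≡ yx`, so for `s = ab` we get `ba ≡ ab ≡ 1`, whence `ba ∈ Sep(A)`.
-/

theorem mem_separator_iff {S : Type*} [Semigroup S] {A : Set S} {x : S} :
    x ∈ Separator A ↔ ∀ c, (x * c ∈ A ↔ c ∈ A) ∧ (c * x ∈ A ↔ c ∈ A) := by
  refine ⟨fun ⟨h₁, h₂, h₃, h₄⟩ c => ⟨?_, ?_⟩, fun h => ⟨?_, ?_, ?_, ?_⟩⟩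
  · exact ⟨not_imp_not.mp (h₃ c), h₁ c⟩
  · exact ⟨not_imp_not.mp (h₄ c), h₂ c⟩
  · exact fun c => (h c).1.2
  · exact fun c => (h c).2.2
  · exact fun c => mt (h c).1.1
  · exact fun c => mt (h c).2.1

theorem mul_mem_separator {S : Type*} [Semigroup S] {A : Set S} {x y : S}
    (hx : x ∈ Separator A) (hy : y ∈ Separator A) : x * y ∈ Separator A := by
  rw [mem_separator_iff] at *
  exact fun c => ⟨by rw [mul_assoc, (hx _).1, (hy c).1], by rw [← mul_assoc, (hy _).2, (hx c).2]⟩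

theorem mem_separator_of_mul_mem_of_mul_mem {S : Type*} [Semigroup S] {A : Set S} {x y : S}
    (hx : x ∈ Separator A) (hxy : x * y ∈ Separator A) (hyx : y * x ∈ Separator A) :
    y ∈ Separator A := by
  rw [mem_separator_iff] at *
  refine fun c => ⟨?_, ?_⟩
  · rw [← (hx _).1, ← mul_assoc, (hxy c).1]
  · rw [← (hx _).2, mul_assoc, (hyx c).2]

@[simp] theorem WithOne.mul_eq_one_iff {S : Type*} [Semigroup S] {u v : WithOne S} :
    u * v = 1 ↔ u = 1 ∧ v = 1 := by
  induction u using WithOne.cases_on <;> induction v using WithOne.cases_on <;>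
    simp [← WithOne.coe_mul]

namespace Set

def toWithOne {S : Type*} (A : Set S) : Set (WithOne S) := (↑) '' A

@[simp] theorem coe_mem_toWithOne {S : Type*} {A : Set S} {c : S} :
    (c : WithOne S) ∈ A.toWithOne ↔ c ∈ A :=
  WithOne.coe_injective.mem_set_image

variable {S : Type*} [Semigroup S] (A : Set S)

def endNeutral : Submonoid (WithOne S) where
  carrier := {t | ∀ w, w ≠ 1 → (t * w ∈ A.toWithOne ↔ w ∈ A.toWithOne) ∧
    (w * t ∈ A.toWithOne ↔ w ∈ A.toWithOne)}
  one_mem' := by simp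
  mul_mem' {t t'} ht ht' w hw := by
    have htw : t' * w ≠ 1 := by simp [hw]
    have hwt : w * t ≠ 1 := by simp [hw]
    rw [mul_assoc, (ht _ htw).1, (ht' w hw).1, ← mul_assoc, (ht' _ hwt).2, (ht w hw).2]
    simp

/-- Syntactic congruence of `A` for nonempty contexts only: with the empty context allowed, no
element could be congruent to `1`, since `1 ∉ A.toWithOne`. -/
def syntacticCon : Con (WithOne S) where
  r w w' := ∀ p q, p * q ≠ 1 → (p * w * q ∈ A.toWithOne ↔ p * w' * q ∈ A.toWithOne)
  iseqv := ⟨fun _ _ _ _ => Iff.rfl, fun h p q hpq => (h p q hpq).symm,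
    fun h h' p q hpq => (h p q hpq).trans (h' p q hpq)⟩
  mul' {w w' v v'} h h' p q hpq := by
    have h₁ := h' (p * w) q (by simp_all)
    have h₂ := h p (v' * q) (by simp_all)
    simp only [mul_assoc] at h₁ h₂ ⊢
    exact h₁.trans h₂

variable {A}

theorem mul_mul_mem_toWithOne_iff {t w t' : WithOne S} (ht : t ∈ A.endNeutral)
    (ht' : t' ∈ A.endNeutral) (hw : w ≠ 1) :
    t * w * t' ∈ A.toWithOne ↔ w ∈ A.toWithOne := by
  rw [(ht' _ (by simp [hw])).2, (ht w hw).1]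

theorem coe_mem_endNeutral_iff {s : S} : (s : WithOne S) ∈ A.endNeutral ↔ s ∈ Separator A := by
  refine ⟨fun h => mem_separator_iff.2 fun c => ?_, fun h w hw => ?_⟩
  · simpa [← WithOne.coe_mul] using h c WithOne.coe_ne_one
  · obtain ⟨c, rfl⟩ := WithOne.ne_one_iff_exists.1 hw
    simpa [← WithOne.coe_mul] using mem_separator_iff.1 h c

theorem mem_separator_of_syntacticCon_one {s : S} (h : A.syntacticCon s 1) : s ∈ Separator A :=
  mem_separator_iff.2 fun c =>
    ⟨by simpa [← WithOne.coe_mul] using h 1 c, by simpa [← WithOne.coe_mul] using h c 1⟩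

end Set

theorem Equiv.Perm.exists_succ_lt_castSucc {m : ℕ} {σ : Equiv.Perm (Fin (m + 1))} (hσ : σ ≠ 1) :
    ∃ i : Fin m, σ i.succ < σ i.castSucc := by
  by_contra! h
  have hmono : StrictMono σ := Fin.strictMono_iff_lt_succ.2 fun i =>
    (h i).lt_of_ne (σ.injective.ne Fin.castSucc_lt_succ.ne)
  refine hσ (Equiv.ext fun k => ?_)
  exact DFunLike.congr_fun
    (Subsingleton.elim (hmono.orderIsoOfSurjective σ σ.surjective) (OrderIso.refl _)) k

theorem List.prod_ofFn_ite_ite {M : Type*} [Monoid M] {n : ℕ} {i j : Fin n} (hij : i < j)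
    (x y c : M) :
    (List.ofFn fun k => if k = i then x else if k = j then y else c).prod =
      c ^ (i : ℕ) * x * c ^ ((j : ℕ) - i - 1) * y * c ^ (n - 1 - j) := by
  have hi := i.2; have hj := j.2; have h := Fin.lt_def.mp hij
  have hlist : (List.ofFn fun k => if k = i then x else if k = j then y else c) =
      List.replicate i c ++
        x :: (List.replicate (j - i - 1) c ++ y :: List.replicate (n - 1 - j) c) := by
    refine List.ext_getElem (by simp; omega) fun k h₁ h₂ => ?_
    simp only [List.getElem_ofFn, List.getElem_append, List.getElem_cons, List.getElem_replicate,
      List.length_replicate, Fin.ext_iff]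
    split_ifs <;> first | rfl | omega
  simp [hlist, mul_assoc]

theorem WithOne.coe_pProd {S : Type*} [Semigroup S] (a : S) (l : List S) :
    ((pProd a l : S) : WithOne S) = ((a :: l).map (↑)).prod := by
  induction l generalizing a with
  | nil => simp [pProd]
  | cons b l ih =>
    rw [show pProd a (b :: l) = pProd (a * b) l from rfl, ih]
    simp [mul_assoc]

namespace PermIdentity

variable {S : Type*} [Semigroup S] {n : ℕ} {hn : 2 ≤ n} {σ : Equiv.Perm (Fin n)}

theorem prod_ofFn_comp (h : PermIdentity (S := S) n hn σ) (g : Fin n → S) :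
    (List.ofFn fun k => (g k : WithOne S)).prod =
      (List.ofFn fun k => (g (σ k) : WithOne S)).prod := by
  obtain ⟨m, rfl⟩ : ∃ m, n = m + 1 := ⟨n - 1, by omega⟩
  simpa [WithOne.coe_pProd, List.ofFn_succ, Function.comp_def] using
    congrArg ((↑) : S → WithOne S) (h g)

theorem exists_pow_mul_mul_pow_eq (hσ : σ ≠ 1) (h : PermIdentity (S := S) n hn σ) :
    ∃ i r α μ β : ℕ, ∀ s x y : S,
      (s : WithOne S) ^ i * x * y * s ^ r = s ^ α * y * s ^ μ * x * s ^ β := by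
  obtain ⟨m, rfl⟩ : ∃ m, n = m + 1 := ⟨n - 1, by omega⟩
  obtain ⟨i, hi⟩ := Equiv.Perm.exists_succ_lt_castSucc (inv_ne_one.2 hσ)
  refine ⟨i, m - (i + 1), σ⁻¹ i.succ, σ⁻¹ i.castSucc - σ⁻¹ i.succ - 1, m - σ⁻¹ i.castSucc,
    fun s x y => ?_⟩
  have := h.prod_ofFn_comp fun k => if k = i.castSucc then x else if k = i.succ then y else s
  simp only [apply_ite ((↑) : S → WithOne S), ← Equiv.Perm.eq_inv_iff_eq] at this
  have hreorder : (fun k => if k = σ⁻¹ i.castSucc then (x : WithOne S)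
      else if k = σ⁻¹ i.succ then (y : WithOne S) else s) =
      fun k => if k = σ⁻¹ i.succ then (y : WithOne S) else if k = σ⁻¹ i.castSucc then ↑x else s :=
    funext fun k => ite_ite_comm _ _ _ _ fun h₁ h₂ => hi.ne' (h₁.symm.trans h₂)
  rw [hreorder, List.prod_ofFn_ite_ite hi, List.prod_ofFn_ite_ite Fin.castSucc_lt_succ] at this
  simpa using this

theorem syntacticCon_coe_one_of_mem_separator (hσ : σ ≠ 1) (h : PermIdentity (S := S) n hn σ)
    {A : Set S} {s : S} (hs : s ∈ Separator A) : A.syntacticCon s 1 := by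
  obtain ⟨i, r, α, μ, β, hE⟩ := h.exists_pow_mul_mul_pow_eq hσ
  have hpow (k : ℕ) : (s : WithOne S) ^ k ∈ A.endNeutral :=
    pow_mem (Set.coe_mem_endNeutral_iff.2 hs) k
  have hswap (x y : S) :
      (x : WithOne S) * y ∈ A.toWithOne ↔ (y : WithOne S) * s ^ μ * x ∈ A.toWithOne :=
    calc (x : WithOne S) * y ∈ A.toWithOne
        ↔ (s : WithOne S) ^ i * (x * y) * s ^ r ∈ A.toWithOne :=
          (Set.mul_mul_mem_toWithOne_iff (hpow i) (hpow r) (by simp)).symm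
      _ ↔ (s : WithOne S) ^ α * (y * s ^ μ * x) * s ^ β ∈ A.toWithOne := by
          simp only [← mul_assoc, hE]
      _ ↔ _ := Set.mul_mul_mem_toWithOne_iff (hpow α) (hpow β) (by simp)
  intro p q hpq
  rcases eq_or_ne p 1 with rfl | hp
  · simpa using Set.mul_mul_mem_toWithOne_iff (hpow 1) (one_mem _)
      (by simpa using hpq)
  obtain ⟨x, rfl⟩ := WithOne.ne_one_iff_exists.1 hp
  rcases eq_or_ne q 1 with rfl | hq
  · simpa using Set.mul_mul_mem_toWithOne_iff (one_mem _) (hpow 1)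
      (WithOne.coe_ne_one (a := x))
  obtain ⟨y, rfl⟩ := WithOne.ne_one_iff_exists.1 hq
  calc (x : WithOne S) * s * y ∈ A.toWithOne
      ↔ ((s * y : S) : WithOne S) * (s : WithOne S) ^ μ * x ∈ A.toWithOne := by
        rw [mul_assoc, ← WithOne.coe_mul, hswap]
    _ ↔ (y : WithOne S) * (s : WithOne S) ^ μ * x ∈ A.toWithOne := by
        simpa [mul_assoc] using Set.mul_mul_mem_toWithOne_iff (hpow 1)
          (one_mem _) (w := (y : WithOne S) * (s : WithOne S) ^ μ * (x : WithOne S)) (by simp)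
    _ ↔ (x : WithOne S) * 1 * y ∈ A.toWithOne := by rw [mul_one, hswap]

theorem mul_mem_separator_comm (hσ : σ ≠ 1) (h : PermIdentity (S := S) n hn σ) {A : Set S}
    {a b : S} (hab : a * b ∈ Separator A) : b * a ∈ Separator A := by
  obtain ⟨i, r, α, μ, β, hE⟩ := h.exists_pow_mul_mul_pow_eq hσ
  set π := A.syntacticCon.mk'
  have hs : π a * π b = 1 := by
    rw [← map_mul, ← WithOne.coe_mul]
    exact (Con.eq _).2 (h.syntacticCon_coe_one_of_mem_separator hσ hab)
  have hcomm : π b * π a = π a * π b := by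
    simpa only [WithOne.coe_mul, map_mul, map_pow, hs, one_pow, one_mul, mul_one]
      using congrArg π (hE (a * b) b a)
  refine Set.mem_separator_of_syntacticCon_one ((Con.eq _).1 ?_)
  change π (b * a : S) = π 1
  rw [WithOne.coe_mul, map_mul, hcomm, hs, map_one]

end PermIdentity

theorem permutative_sep_empty_or_reflexive_unitary_subsemigroup {S : Type*} [Semigroup S]
    (n : ℕ) (hn : 2 ≤ n) (σ : Equiv.Perm (Fin n)) (hσ : σ ≠ 1)
    (hperm : PermIdentity (S := S) n hn σ) (A : Set S) :
    Separator A = ∅ ∨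
      ((∀ a ∈ Separator A, ∀ b ∈ Separator A, a * b ∈ Separator A) ∧
       (∀ a b : S, a * b ∈ Separator A → b * a ∈ Separator A) ∧
       (∀ a b : S, a ∈ Separator A → a * b ∈ Separator A → b ∈ Separator A) ∧
       (∀ a b : S, a ∈ Separator A → b * a ∈ Separator A → b ∈ Separator A)) := by
  have hrefl {a b : S} : a * b ∈ Separator A → b * a ∈ Separator A :=
    hperm.mul_mem_separator_comm hσ
  refine Or.inr ⟨fun a ha b hb => mul_mem_separator ha hb, fun a b => hrefl, ?_, ?_⟩
  · exact fun a b ha hab => mem_separator_of_mul_mem_of_mul_mem ha hab (hrefl hab)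
  · exact fun a b ha hba => mem_separator_of_mul_mem_of_mul_mem ha (hrefl hba) hba
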